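/- Soundness of amendment: if (D,C) is well-formed and, with D' := amend_D D ps, we have (D', amend D ps C, s) --[tl]-->** (D', C', s'), then there exist tl', tl'', a choreography C'' and state s'' such that (D', C', s') --[tl']-->** (D', amend D ps C'', s''), (D, C, s) --[tl'']-->** (D, C'', s''), and sel_exp tl'' (tl ++ tl'). -/

import Mathlib

namespace CC

abbrev Pid := ℕ
abbrev Var := ℕ
abbrev Val := ℕ
abbrev RecVar := ℕ

inductive Label | left | right
deriving Repr

inductive Expr | zero | var (x : Var) | succ (x : Var)
deriving Repr

inductive BExpr | eq (x y : Var)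
deriving Repr

/-- Behaviours of the process calculus SP. -/
inductive Behaviour
| send (p : Pid) (e : Expr) (B : Behaviour)
| recv (p : Pid) (x : Var) (B : Behaviour)
| sel (p : Pid) (l : Label) (B : Behaviour)
| branch (p : Pid) (mL mR : Option Behaviour)
| cond (b : BExpr) (B1 B2 : Behaviour)
| call (X : RecVar)
| nil
deriving Repr

mutual
/-- The merge relation on behaviours. -/
inductive Merge : Behaviour → Behaviour → Behaviour → Prop
| nil : Merge .nil .nil .nil
| call (X) : Merge (.call X) (.call X) (.call X)
| send {B1 B2 B p e} : Merge B1 B2 B → Merge (.send p e B1) (.send p e B2) (.send p e B)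
| recv {B1 B2 B p x} : Merge B1 B2 B → Merge (.recv p x B1) (.recv p x B2) (.recv p x B)
| sel {B1 B2 B p l} : Merge B1 B2 B → Merge (.sel p l B1) (.sel p l B2) (.sel p l B)
| cond {b Bt1 Bt2 Bt Be1 Be2 Be} : Merge Bt1 Bt2 Bt → Merge Be1 Be2 Be →
    Merge (.cond b Bt1 Be1) (.cond b Bt2 Be2) (.cond b Bt Be)
| branch {p mL1 mL2 mL mR1 mR2 mR} : MergeO mL1 mL2 mL → MergeO mR1 mR2 mR →
    Merge (.branch p mL1 mR1) (.branch p mL2 mR2) (.branch p mL mR)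

/-- Componentwise merge on optional behaviours. -/
inductive MergeO : Option Behaviour → Option Behaviour → Option Behaviour → Prop
| none : MergeO none none none
| someNone (B) : MergeO (some B) none (some B)
| noneSome (B) : MergeO none (some B) (some B)
| someSome {B1 B2 B} : Merge B1 B2 B → MergeO (some B1) (some B2) (some B)
end

/-- Interactions. -/
inductive Eta
| com (p : Pid) (e : Expr) (q : Pid) (x : Var)
| sel (p q : Pid) (l : Label)
deriving Repr

/-- Choreographies of Core Choreographies. -/
inductive Chor
| seq (η : Eta) (C : Chor)
| cond (p : Pid) (b : BExpr) (C1 C2 : Chor)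
| call (X : RecVar)
| nil
deriving Repr

/-- Sets of procedure definitions. -/
abbrev DefSet := RecVar → List Pid × Chor

def procsEta : Eta → Finset Pid
| .com p _ q _ => {p, q}
| .sel p q _ => {p, q}

/-- The set of processes occurring in a choreography. -/
def procsC : Chor → Finset Pid
| .seq η C => procsEta η ∪ procsC C
| .cond p _ C1 C2 => insert p (procsC C1 ∪ procsC C2)
| .call _ => ∅
| .nil => ∅

def etaWF : Eta → Prop
| .com p _ q _ => p ≠ q
| .sel p q _ => p ≠ q

/-- Well-formed choreographies: no self-communications. -/
def Chor_WF : Chor → Prop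
| .seq η C => etaWF η ∧ Chor_WF C
| .cond _ _ C1 C2 => Chor_WF C1 ∧ Chor_WF C2
| .call _ => True
| .nil => True

/-- Well-formed choreographic programs. -/
def Program_WF (D : DefSet) (C : Chor) : Prop :=
  Chor_WF C ∧ ∀ X, Chor_WF (D X).2

/-- Behaviour projection. -/
inductive BProj (D : DefSet) : Chor → Pid → Behaviour → Prop
| send {p e q x C B} : BProj D C p B → BProj D (.seq (.com p e q x) C) p (.send q e B)
| recv {p e q x C B} : p ≠ q → BProj D C q B → BProj D (.seq (.com p e q x) C) q (.recv p x B)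
| com {p e q x C r B} : p ≠ r → q ≠ r → BProj D C r B → BProj D (.seq (.com p e q x) C) r B
| pick {p q l C B} : BProj D C p B → BProj D (.seq (.sel p q l) C) p (.sel q l B)
| left {p q C B} : p ≠ q → BProj D C q B →
    BProj D (.seq (.sel p q .left) C) q (.branch p (some B) none)
| right {p q C B} : p ≠ q → BProj D C q B →
    BProj D (.seq (.sel p q .right) C) q (.branch p none (some B))
| selSkip {p q l C r B} : p ≠ r → q ≠ r → BProj D C r B → BProj D (.seq (.sel p q l) C) r B
| condEval {p b C1 C2 B1 B2} : BProj D C1 p B1 → BProj D C2 p B2 →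
    BProj D (.cond p b C1 C2) p (.cond b B1 B2)
| condMerge {p b C1 C2 r B1 B2 B} : p ≠ r → BProj D C1 r B1 → BProj D C2 r B2 →
    Merge B1 B2 B → BProj D (.cond p b C1 C2) r B
| callIn {X r} : r ∈ (D X).1 → BProj D (.call X) r (.call X)
| callOut {X r} : r ∉ (D X).1 → BProj D (.call X) r .nil
| nil {r} : BProj D .nil r .nil

/-- Projectability of a choreography on a process. -/
def projectable_B (D : DefSet) (C : Chor) (p : Pid) : Prop := ∃ B, BProj D C p B

/-- Prepend a selection of label `l` from `p` to each process in `ps`. -/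
def add_sels (p : Pid) (l : Label) (ps : List Pid) (C : Chor) : Chor :=
  ps.foldr (fun r acc => .seq (.sel p r l) acc) C

open Classical in
/-- The processes of `ps` that need to be informed of the outcome of the conditional. -/
noncomputable def up_list (D : DefSet) (p : Pid) (b : BExpr) (ps : List Pid)
    (C1 C2 : Chor) : List Pid :=
  ps.filter fun r => decide (r ≠ p ∧ ¬ projectable_B D (.cond p b C1 C2) r)

/-- The amendment procedure. -/
noncomputable def amend (D : DefSet) (ps : List Pid) : Chor → Chor
| .seq η C => .seq η (amend D ps C)
| .cond p b C1 C2 =>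
    let A1 := amend D ps C1
    let A2 := amend D ps C2
    let l := up_list D p b ps A1 A2
    .cond p b (add_sels p .left l A1) (add_sels p .right l A2)
| .call X => .call X
| .nil => .nil

/-- Amendment of a set of procedure definitions. -/
noncomputable def amend_D (D : DefSet) (ps : List Pid) : DefSet :=
  fun X => ((D X).1, amend D ps (D X).2)

/-- Memory states. -/
abbrev State := Pid → Var → Val

def updState (s : State) (p : Pid) (x : Var) (v : Val) : State :=
  fun q y => if q = p ∧ y = x then v else s q y

def eval : Expr → State → Pid → Val
| .zero, _, _ => 0
| .var x, s, p => s p x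
| .succ x, s, p => s p x + 1

def beval : BExpr → State → Pid → Bool
| .eq x y, s, p => s p x == s p y

/-- Transition labels. -/
inductive TLabel
| com (p : Pid) (v : Val) (q : Pid)
| sel (p q : Pid) (l : Label)
| tau (p : Pid)
deriving Repr

def tlProcs : TLabel → Finset Pid
| .com p _ q => {p, q}
| .sel p q _ => {p, q}
| .tau p => {p}

/-- Labelled transition semantics of choreographic configurations. -/
inductive Step (D : DefSet) : Chor → State → TLabel → Chor → State → Prop
| com {p e q x C s} :
    Step D (.seq (.com p e q x) C) s (.com p (eval e s p) q) C (updState s q x (eval e s p))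
| sel {p q l C s} : Step D (.seq (.sel p q l) C) s (.sel p q l) C s
| thenB {p b C1 C2 s} : beval b s p = true → Step D (.cond p b C1 C2) s (.tau p) C1 s
| elseB {p b C1 C2 s} : beval b s p = false → Step D (.cond p b C1 C2) s (.tau p) C2 s
| call {X p s} : p ∈ (D X).1 → Step D (.call X) s (.tau p) (D X).2 s
| delayEta {η C s t C' s'} : Disjoint (procsEta η) (tlProcs t) →
    Step D C s t C' s' → Step D (.seq η C) s t (.seq η C') s'
| delayCond {p b C1 C2 s t C1' C2' s'} : p ∉ tlProcs t →
    Step D C1 s t C1' s' → Step D C2 s t C2' s' →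
    Step D (.cond p b C1 C2) s t (.cond p b C1' C2') s'

/-- Reflexive-transitive closure of the transition relation. -/
inductive StepMany (D : DefSet) : Chor → State → List TLabel → Chor → State → Prop
| refl {C s} : StepMany D C s [] C s
| step {C s t C' s' tl C'' s''} : Step D C s t C' s' → StepMany D C' s' tl C'' s'' →
    StepMany D C s (t :: tl) C'' s''

/-- Selection expansion of lists of transition labels. -/
inductive SelExp : List TLabel → List TLabel → Prop
| base {tl tl'} : tl.Perm tl' → SelExp tl tl'
| extra {p q l tl tl' tl''} : SelExp tl tl' → (TLabel.sel p q l :: tl').Perm tl'' →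
    SelExp tl tl''

/-- A configuration is stuck when it admits no transition. -/
def Stuck (D : DefSet) (C : Chor) (s : State) : Prop :=
  ∀ t C' s', ¬ Step D C s t C' s'

/-- Termination: there is no infinite execution from the configuration. -/
def Terminates (D : DefSet) (C : Chor) (s : State) : Prop :=
  ¬ ∃ f : ℕ → Chor × State × TLabel,
      (f 0).1 = C ∧ (f 0).2.1 = s ∧
      ∀ n, Step D (f n).1 (f n).2.1 (f n).2.2 (f (n+1)).1 (f (n+1)).2.1

/-- `(D, C)` implements the partial function `f` with input processes `ps`
(storing the inputs in variable `0`) and output process `q`. -/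
def implements (D : DefSet) (C : Chor) {m : ℕ} (f : (Fin m → ℕ) → Part ℕ)
    (ps : Fin m → Pid) (q : Pid) : Prop :=
  ∀ (s : State) (n : Fin m → ℕ), (∀ i, s (ps i) 0 = n i) →
    (∀ v ∈ f n, Terminates D C s ∧
      ∀ tl C' s', StepMany D C s tl C' s' → Stuck D C' s' → s' q 0 = v) ∧
    (¬ (f n).Dom → ¬ ∃ tl C' s', StepMany D C s tl C' s' ∧ Stuck D C' s')

/-- `ps` covers all processes used by the program `(D, C)`. -/
def CoversProcs (D : DefSet) (C : Chor) (ps : List Pid) : Prop :=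
  (∀ r ∈ procsC C, r ∈ ps) ∧ ∀ X, ∀ r ∈ procsC (D X).2, r ∈ ps

end CC

namespace CC

/-! ### Auxiliary machinery for soundness of amendment -/

def IsSels (l : List TLabel) : Prop := ∀ t ∈ l, ∃ p q lab, t = TLabel.sel p q lab

def IsEnd : Chor → Prop := fun C => C = .nil ∨ ∃ X, C = .call X

def etaLab : Eta → State → TLabel
| .com p e q _, s => .com p (eval e s p) q
| .sel p q l, _ => .sel p q l

def etaNext : Eta → State → State
| .com p e q x, s => updState s q x (eval e s p)
| .sel _ _ _, s => s

theorem step_eta (Δ : DefSet) (η : Eta) (C : Chor) (s : State) :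
    Step Δ (.seq η C) s (etaLab η s) C (etaNext η s) := by
  cases η with
  | com p e q x => exact Step.com
  | sel p q l => exact Step.sel

theorem stepmany_trans {Δ : DefSet} {B s T1 B1 s1 T2 B2 s2}
    (h1 : StepMany Δ B s T1 B1 s1) (h2 : StepMany Δ B1 s1 T2 B2 s2) :
    StepMany Δ B s (T1 ++ T2) B2 s2 := by
  induction h1 with
  | refl => simpa using h2
  | step hs _ ih => exact .step hs (ih h2)

theorem eval_congr (e : Expr) {sA sB : State} {p : Pid} (h : sA p = sB p) :
    eval e sA p = eval e sB p := by
  cases e <;> simp [eval, h]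

theorem beval_congr (b : BExpr) {sA sB : State} {p : Pid} (h : sA p = sB p) :
    beval b sA p = beval b sB p := by
  cases b with | eq x y => simp [beval, h]

theorem step_frame {Δ : DefSet} {B s t B' s'} (h : Step Δ B s t B' s') :
    ∀ r, r ∉ tlProcs t → s' r = s r := by
  induction h with
  | @com p e q x C s =>
    intro r hr
    simp [tlProcs] at hr
    funext y
    simp [updState, hr.2]
  | sel => intro r _; rfl
  | thenB => intro r _; rfl
  | elseB => intro r _; rfl
  | call => intro r _; rfl
  | delayEta _ _ ih => exact ih
  | delayCond _ _ _ ih1 _ => exact ih1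

theorem many_frame {Δ : DefSet} {B s T B' s'} (h : StepMany Δ B s T B' s') :
    ∀ r, (∀ t ∈ T, r ∉ tlProcs t) → s' r = s r := by
  induction h with
  | refl => intro r _; rfl
  | @step C s t C' s' tl C'' s'' hs _ ih =>
    intro r hr
    rw [ih r (fun u hu => hr u (List.mem_cons_of_mem _ hu)),
      step_frame hs r (hr t (List.mem_cons_self))]

theorem step_rebase {Δ : DefSet} {B s t B' s'} (h : Step Δ B s t B' s') :
    ∀ s2 : State, (∀ r ∈ tlProcs t, s2 r = s r) →
      Step Δ B s2 t B' (fun r => if r ∈ tlProcs t then s' r else s2 r) := by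
  induction h with
  | @com p e q x C s =>
    intro s2 hag
    have hp : s2 p = s p := hag p (by simp [tlProcs])
    have hq : s2 q = s q := hag q (by simp [tlProcs])
    have hev : eval e s2 p = eval e s p := eval_congr e hp
    have key : (fun r => if r ∈ tlProcs (TLabel.com p (eval e s p) q)
        then (updState s q x (eval e s p)) r else s2 r)
        = updState s2 q x (eval e s2 p) := by
      funext r y
      simp only [tlProcs, updState, ite_apply, hev]
      by_cases hrq : r = q
      · subst hrq
        by_cases hyx : y = x
        · simp [hyx, updState]
        · simp [hyx, congrFun hq y, updState]
      · by_cases hrp : r = p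
        · subst hrp
          simp [hrq, congrFun hp y, updState]
        · simp [hrq, hrp]
    rw [key, ← hev]
    exact Step.com
  | @sel p q l C s =>
    intro s2 hag
    have key : (fun r => if r ∈ tlProcs (TLabel.sel p q l) then s r else s2 r) = s2 := by
      funext r
      by_cases hr : r ∈ tlProcs (TLabel.sel p q l) <;> simp [hr]
      · exact (hag r hr).symm
    rw [key]
    exact Step.sel
  | @thenB p bb C1 C2 s hbe =>
    intro s2 hag
    have key : (fun r => if r ∈ tlProcs (TLabel.tau p) then s r else s2 r) = s2 := by
      funext r
      by_cases hr : r ∈ tlProcs (TLabel.tau p) <;> simp [hr]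
      · exact (hag r hr).symm
    rw [key]
    exact Step.thenB (by rw [beval_congr bb (hag p (by simp [tlProcs]))]; exact hbe)
  | @elseB p bb C1 C2 s hbe =>
    intro s2 hag
    have key : (fun r => if r ∈ tlProcs (TLabel.tau p) then s r else s2 r) = s2 := by
      funext r
      by_cases hr : r ∈ tlProcs (TLabel.tau p) <;> simp [hr]
      · exact (hag r hr).symm
    rw [key]
    exact Step.elseB (by rw [beval_congr bb (hag p (by simp [tlProcs]))]; exact hbe)
  | @call X p s hp =>
    intro s2 hag
    have key : (fun r => if r ∈ tlProcs (TLabel.tau p) then s r else s2 r) = s2 := by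
      funext r
      by_cases hr : r ∈ tlProcs (TLabel.tau p) <;> simp [hr]
      · exact (hag r hr).symm
    rw [key]
    exact Step.call hp
  | delayEta hd _ ih =>
    intro s2 hag
    exact Step.delayEta hd (ih s2 hag)
  | delayCond hp _ _ ih1 ih2 =>
    intro s2 hag
    exact Step.delayCond hp (ih1 s2 hag) (ih2 s2 hag)

theorem many_rebase {Δ : DefSet} {B s T B' s'} (h : StepMany Δ B s T B' s') :
    ∀ s2 : State, (∀ r, (∃ t ∈ T, r ∈ tlProcs t) → s2 r = s r) →
      ∃ s2', StepMany Δ B s2 T B' s2' ∧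
        (∀ r, (∃ t ∈ T, r ∈ tlProcs t) → s2' r = s' r) ∧
        (∀ r, (¬ ∃ t ∈ T, r ∈ tlProcs t) → s2' r = s2 r) := by
  induction h with
  | refl =>
    intro s2 _
    exact ⟨s2, .refl, fun r hr => by rcases hr with ⟨t, ht, _⟩; simp at ht, fun r _ => rfl⟩
  | @step C s t C' sm tl C'' s'' hs hrest ih =>
    intro s2 hag
    have hstep2 := step_rebase hs s2
      (fun r hr => hag r ⟨t, List.mem_cons_self, hr⟩)
    set m2 : State := fun r => if r ∈ tlProcs t then sm r else s2 r with hm2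
    have hag2 : ∀ r, (∃ u ∈ tl, r ∈ tlProcs u) → m2 r = sm r := by
      intro r hr
      by_cases hrt : r ∈ tlProcs t
      · simp [hm2, hrt]
      · have h1 : sm r = s r := step_frame hs r hrt
        have h2 : s2 r = s r := by
          rcases hr with ⟨u, hu, hru⟩
          exact hag r ⟨u, List.mem_cons_of_mem _ hu, hru⟩
        simp [hm2, hrt, h1, h2]
    obtain ⟨s3, hrun, hin, hout⟩ := ih m2 hag2
    refine ⟨s3, .step hstep2 hrun, ?_, ?_⟩
    · intro r hr
      by_cases hrl : ∃ u ∈ tl, r ∈ tlProcs u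
      · exact hin r hrl
      · have h1 : s3 r = m2 r := hout r hrl
        rcases hr with ⟨u, hu, hru⟩
        rcases List.mem_cons.mp hu with rfl | hu'
        · have h2 : s'' r = sm r := many_frame hrest r (by
            intro v hv
            intro hrv
            exact hrl ⟨v, hv, hrv⟩)
          simp [h1, hm2, hru, h2]
        · exact absurd ⟨u, hu', hru⟩ hrl
    · intro r hr
      have hrl : ¬ ∃ u ∈ tl, r ∈ tlProcs u := by
        intro ⟨u, hu, hru⟩; exact hr ⟨u, List.mem_cons_of_mem _ hu, hru⟩
      have hrt : r ∉ tlProcs t := by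
        intro hrt; exact hr ⟨t, List.mem_cons_self, hrt⟩
      rw [hout r hrl]
      simp [hm2, hrt]

theorem seq_extract {Δ : DefSet} :
    ∀ {A s T E sE}, StepMany Δ A s T E sE → ∀ {η B0}, A = .seq η B0 → IsEnd E →
    ∃ T1 T2 B1 s1, T = T1 ++ etaLab η s1 :: T2 ∧
      (∀ t ∈ T1, Disjoint (procsEta η) (tlProcs t)) ∧
      StepMany Δ B0 s T1 B1 s1 ∧ StepMany Δ B1 (etaNext η s1) T2 E sE := by
  intro A s T E sE h
  induction h with
  | @refl C s =>
    intro η B0 hA hE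
    subst hA
    rcases hE with h | ⟨X, h⟩ <;> cases h
  | @step C s t C' sm tl C'' s'' hs hrest ih =>
    intro η B0 hA hE
    subst hA
    cases hs with
    | com =>
      exact ⟨[], tl, _, s, rfl, by simp, .refl, hrest⟩
    | sel =>
      exact ⟨[], tl, _, s, rfl, by simp, .refl, hrest⟩
    | delayEta hd hsub =>
      obtain ⟨T1, T2, B1, s1, hT, hdisj, h1, h2⟩ := ih rfl hE
      refine ⟨t :: T1, T2, B1, s1, by rw [hT]; rfl, ?_, .step hsub h1, h2⟩
      intro u hu
      rcases List.mem_cons.mp hu with rfl | hu'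
      · exact hd
      · exact hdisj u hu'

theorem cond_extract {Δ : DefSet} :
    ∀ {A s T E sE}, StepMany Δ A s T E sE → ∀ {p b B1 B2}, A = .cond p b B1 B2 → IsEnd E →
    ∃ T1 T2 B1' B2' s1, T = T1 ++ TLabel.tau p :: T2 ∧
      (∀ t ∈ T1, p ∉ tlProcs t) ∧
      StepMany Δ B1 s T1 B1' s1 ∧ StepMany Δ B2 s T1 B2' s1 ∧
      ((beval b s1 p = true ∧ StepMany Δ B1' s1 T2 E sE) ∨
       (beval b s1 p = false ∧ StepMany Δ B2' s1 T2 E sE)) := by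
  intro A s T E sE h
  induction h with
  | refl =>
    intro p b B1 B2 hA hE
    subst hA
    rcases hE with h | ⟨X, h⟩ <;> cases h
  | @step C s t C' sm tl C'' s'' hs hrest ih =>
    intro p b B1 B2 hA hE
    subst hA
    cases hs with
    | thenB hbe => exact ⟨[], tl, _, _, s, rfl, by simp, .refl, .refl, .inl ⟨hbe, hrest⟩⟩
    | elseB hbe => exact ⟨[], tl, _, _, s, rfl, by simp, .refl, .refl, .inr ⟨hbe, hrest⟩⟩
    | delayCond hp h1 h2 =>
      obtain ⟨T1, T2, B1', B2', s1, hT, hd, hs1, hs2, hbr⟩ := ih rfl hE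
      refine ⟨t :: T1, T2, B1', B2', s1, by rw [hT]; rfl, ?_, .step h1 hs1, .step h2 hs2, hbr⟩
      intro u hu
      rcases List.mem_cons.mp hu with rfl | hu'
      · exact hp
      · exact hd u hu'

theorem sels_strip {Δ : DefSet} {p : Pid} {lab : Label} :
    ∀ (Lst : List Pid) {A s U E sE}, StepMany Δ (add_sels p lab Lst A) s U E sE → IsEnd E →
    ∃ U' exs, StepMany Δ A s U' E sE ∧ IsSels exs ∧ (U' ++ exs).Perm U := by
  intro Lst
  induction Lst with
  | nil =>
    intro A s U E sE h _
    exact ⟨U, [], h, by intro t ht; simp at ht, by simp⟩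
  | cons r rest ih =>
    intro A s U E sE h hE
    have h' : StepMany Δ (.seq (.sel p r lab) (add_sels p lab rest A)) s U E sE := h
    obtain ⟨U1, U2, B1, s1, hU, _, h1, h2⟩ := seq_extract h' rfl hE
    have h2' : StepMany Δ B1 s1 U2 E sE := h2
    obtain ⟨U', exs, hA, hsels, hperm⟩ := ih (stepmany_trans h1 h2') hE
    refine ⟨U', TLabel.sel p r lab :: exs, hA, ?_, ?_⟩
    · intro t ht
      rcases List.mem_cons.mp ht with rfl | ht'
      · exact ⟨p, r, lab, rfl⟩
      · exact hsels t ht'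
    · have p1 : (U' ++ TLabel.sel p r lab :: exs).Perm (TLabel.sel p r lab :: (U' ++ exs)) :=
        List.perm_middle
      have p2 : (TLabel.sel p r lab :: (U' ++ exs)).Perm (TLabel.sel p r lab :: (U1 ++ U2)) :=
        hperm.cons _
      have p3 : (TLabel.sel p r lab :: (U1 ++ U2)).Perm (U1 ++ TLabel.sel p r lab :: U2) :=
        List.perm_middle.symm
      rw [hU]
      exact (p1.trans p2).trans p3

theorem headrun (Δ : DefSet) : ∀ (B : Chor) (s : State),
    ∃ U E sE, StepMany Δ B s U E sE ∧ IsEnd E := by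
  intro B
  induction B with
  | seq η C0 ih =>
    intro s
    obtain ⟨U, E, sE, hr, hE⟩ := ih (etaNext η s)
    exact ⟨etaLab η s :: U, E, sE, .step (step_eta Δ η C0 s) hr, hE⟩
  | cond p b C1 C2 ih1 ih2 =>
    intro s
    cases hbe : beval b s p with
    | true =>
      obtain ⟨U, E, sE, hr, hE⟩ := ih1 s
      exact ⟨TLabel.tau p :: U, E, sE, .step (Step.thenB hbe) hr, hE⟩
    | false =>
      obtain ⟨U, E, sE, hr, hE⟩ := ih2 s
      exact ⟨TLabel.tau p :: U, E, sE, .step (Step.elseB hbe) hr, hE⟩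
  | call X => intro s; exact ⟨[], .call X, s, .refl, .inr ⟨X, rfl⟩⟩
  | nil => intro s; exact ⟨[], .nil, s, .refl, .inl rfl⟩

theorem selExp_of_perm : ∀ {ex T'' T : List TLabel},
    IsSels ex → (T'' ++ ex).Perm T → SelExp T'' T := by
  intro ex
  induction ex with
  | nil => intro T'' T _ hp; exact SelExp.base (by simpa using hp)
  | cons e ex ih =>
    intro T'' T hsels hp
    obtain ⟨p, q, lab, rfl⟩ := hsels e (List.mem_cons_self)
    have h1 : SelExp T'' (T'' ++ ex) :=
      ih (fun t ht => hsels t (List.mem_cons_of_mem _ ht)) (List.Perm.refl _)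
    exact SelExp.extra h1 (List.Perm.trans List.perm_middle.symm hp)

end CC

namespace CC

theorem frs (D : DefSet) (ps : List Pid) :
    ∀ (n : ℕ) (T : List TLabel) (C : Chor) (s : State) (E : Chor) (sE : State),
      T.length ≤ n → StepMany (amend_D D ps) (amend D ps C) s T E sE → IsEnd E →
      ∃ T'' ex, StepMany D C s T'' E sE ∧ IsSels ex ∧ (T'' ++ ex).Perm T := by
  intro n
  induction n with
  | zero =>
    intro T C s E sE hlen h hE
    have hT : T = [] := List.eq_nil_of_length_eq_zero (Nat.le_zero.mp hlen)
    subst hT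
    cases h
    -- E = amend D ps C, sE = s
    cases C with
    | nil =>
      refine ⟨[], [], ?_, by intro t ht; simp at ht, by simp⟩
      simp only [amend]
      exact .refl
    | call X =>
      refine ⟨[], [], ?_, by intro t ht; simp at ht, by simp⟩
      simp only [amend]
      exact .refl
    | seq η C0 => rcases hE with h | ⟨X, h⟩ <;> simp [amend] at h
    | cond p b C1 C2 => rcases hE with h | ⟨X, h⟩ <;> simp [amend] at h
  | succ n ih =>
    intro T C s E sE hlen h hE
    cases C with
    | nil =>
      simp only [amend] at h
      cases h with
      | refl => exact ⟨[], [], .refl, by intro t ht; simp at ht, by simp⟩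
      | step hs _ => cases hs
    | call X =>
      simp only [amend] at h
      cases h with
      | refl => exact ⟨[], [], .refl, by intro t ht; simp at ht, by simp⟩
      | @step _ _ t C2 s2 T0 _ _ hs hrest =>
        cases hs with
        | @call _ p _ hp =>
          have hp' : p ∈ (D X).1 := by simpa [amend_D] using hp
          have hrest' : StepMany (amend_D D ps) (amend D ps (D X).2) s T0 E sE := hrest
          obtain ⟨T0'', ex, ho, hsels, hperm⟩ :=
            ih T0 (D X).2 s E sE (by simp only [List.length_cons] at hlen; omega) hrest' hE
          refine ⟨TLabel.tau p :: T0'', ex, .step (Step.call hp') ho, hsels, ?_⟩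
          simpa using hperm.cons (TLabel.tau p)
    | seq η C0 =>
      rw [show amend D ps (.seq η C0) = .seq η (amend D ps C0) from by simp [amend]] at h
      obtain ⟨T1, T2, B1, s1, hT, hdisj, h1, h2⟩ := seq_extract h rfl hE
      have hfr : ∀ r, (∀ t ∈ T1, r ∉ tlProcs t) → s1 r = s r := fun r hr => many_frame h1 r hr
      have hη : ∀ r ∈ procsEta η, s1 r = s r := by
        intro r hrη
        exact hfr r (fun t ht => Finset.disjoint_left.mp (hdisj t ht) hrη)
      have hlab : etaLab η s1 = etaLab η s := by
        cases η with
        | com p e q x =>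
          have : s1 p = s p := hη p (by simp [procsEta])
          simp [etaLab, eval_congr e this]
        | sel p q l => rfl
      obtain ⟨s2', hrun1, hin, hout⟩ := many_rebase h1 (etaNext η s) (by
        intro r hr
        rcases hr with ⟨t, ht, hrt⟩
        have hrη : r ∉ procsEta η := fun hm => Finset.disjoint_left.mp (hdisj t ht) hm hrt
        cases η with
        | com p e q x =>
          have hrq : r ≠ q := by simp [procsEta] at hrη; exact hrη.2
          funext y
          simp [etaNext, updState, hrq]
        | sel p q l => rfl)
      have hs2' : s2' = etaNext η s1 := by
        funext r
        by_cases hr : ∃ t ∈ T1, r ∈ tlProcs t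
        · rw [hin r hr]
          have hrη : r ∉ procsEta η := by
            obtain ⟨t, ht, hrt⟩ := hr
            exact fun hm => Finset.disjoint_left.mp (hdisj t ht) hm hrt
          cases η with
          | com p e q x =>
            have hrq : r ≠ q := by simp [procsEta] at hrη; exact hrη.2
            funext y
            simp [etaNext, updState, hrq]
          | sel p q l => rfl
        · rw [hout r hr]
          push_neg at hr
          have hrs : s1 r = s r := hfr r hr
          cases η with
          | com p e q x =>
            have hps : s1 p = s p := hη p (by simp [procsEta])
            funext y
            simp only [etaNext, updState]
            by_cases hq : r = q ∧ y = x
            · simp [hq, eval_congr e hps]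
            · simp [hq, congrFun hrs y]
          | sel p q l => exact hrs.symm
      rw [hs2'] at hrun1
      have hglue := stepmany_trans hrun1 h2
      have hlen2 : (T1 ++ T2).length ≤ n := by
        have := congrArg List.length hT
        simp at this
        simp [List.length_append]
        omega
      obtain ⟨T0'', ex0, ho, hsels, hperm0⟩ := ih (T1 ++ T2) C0 (etaNext η s) E sE hlen2 hglue hE
      refine ⟨etaLab η s :: T0'', ex0, .step (step_eta D η C0 s) ho, hsels, ?_⟩
      have p1 : (etaLab η s :: (T0'' ++ ex0)).Perm (etaLab η s :: (T1 ++ T2)) := hperm0.cons _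
      have p2 : (etaLab η s :: (T1 ++ T2)).Perm (T1 ++ etaLab η s :: T2) := List.perm_middle.symm
      have : ((etaLab η s :: T0'') ++ ex0).Perm (T1 ++ etaLab η s :: T2) := by
        simpa using p1.trans p2
      rw [hT, hlab]
      exact this
    | cond p b C1 C2 =>
      rw [show amend D ps (.cond p b C1 C2) = .cond p b
          (add_sels p .left (up_list D p b ps (amend D ps C1) (amend D ps C2)) (amend D ps C1))
          (add_sels p .right (up_list D p b ps (amend D ps C1) (amend D ps C2)) (amend D ps C2))
        from by simp [amend]] at h
      obtain ⟨T1, T2, B1', B2', s1, hT, hp, hr1, hr2, hbr⟩ := cond_extract h rfl hE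
      have hsp : s1 p = s p := many_frame hr1 p hp
      have hbe : beval b s1 p = beval b s p := beval_congr b hsp
      have hlenT : T1.length + T2.length ≤ n := by
        have := congrArg List.length hT
        simp at this
        omega
      rcases hbr with ⟨hbt, h2⟩ | ⟨hbf, h2⟩
      · have hglue := stepmany_trans hr1 h2
        obtain ⟨U', exs, hA, hsels1, hperm1⟩ := sels_strip _ hglue hE
        have hlenU : U'.length ≤ n := by
          have := hperm1.length_eq
          simp [List.length_append] at this
          omega
        obtain ⟨T1'', ex1, ho, hsels2, hperm2⟩ := ih U' C1 s E sE hlenU hA hE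
        refine ⟨TLabel.tau p :: T1'', ex1 ++ exs,
          .step (Step.thenB (by rw [← hbe]; exact hbt)) ho, ?_, ?_⟩
        · intro t ht
          rcases List.mem_append.mp ht with h' | h'
          exacts [hsels2 t h', hsels1 t h']
        · have p0 : ((T1'' ++ ex1) ++ exs).Perm (U' ++ exs) := hperm2.append_right exs
          have p1 : ((T1'' ++ ex1) ++ exs).Perm (T1 ++ T2) := p0.trans hperm1
          have p2 : (TLabel.tau p :: (T1 ++ T2)).Perm (T1 ++ TLabel.tau p :: T2) :=
            List.perm_middle.symm
          have : ((TLabel.tau p :: T1'') ++ (ex1 ++ exs)).Perm (T1 ++ TLabel.tau p :: T2) := by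
            have := (p1.cons (TLabel.tau p)).trans p2
            simpa using this
          rw [hT]
          exact this
      · have hglue := stepmany_trans hr2 h2
        obtain ⟨U', exs, hA, hsels1, hperm1⟩ := sels_strip _ hglue hE
        have hlenU : U'.length ≤ n := by
          have := hperm1.length_eq
          simp [List.length_append] at this
          omega
        obtain ⟨T1'', ex1, ho, hsels2, hperm2⟩ := ih U' C2 s E sE hlenU hA hE
        refine ⟨TLabel.tau p :: T1'', ex1 ++ exs,
          .step (Step.elseB (by rw [← hbe]; exact hbf)) ho, ?_, ?_⟩
        · intro t ht
          rcases List.mem_append.mp ht with h' | h'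
          exacts [hsels2 t h', hsels1 t h']
        · have p0 : ((T1'' ++ ex1) ++ exs).Perm (U' ++ exs) := hperm2.append_right exs
          have p1 : ((T1'' ++ ex1) ++ exs).Perm (T1 ++ T2) := p0.trans hperm1
          have p2 : (TLabel.tau p :: (T1 ++ T2)).Perm (T1 ++ TLabel.tau p :: T2) :=
            List.perm_middle.symm
          have : ((TLabel.tau p :: T1'') ++ (ex1 ++ exs)).Perm (T1 ++ TLabel.tau p :: T2) := by
            have := (p1.cons (TLabel.tau p)).trans p2
            simpa using this
          rw [hT]
          exact this

end CC

open CC in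
theorem amend_sound_many (D : CC.DefSet) (C : CC.Chor) (ps : List CC.Pid)
    (s : CC.State) (tl : List CC.TLabel) (C' : CC.Chor) (s' : CC.State)
    (hWF : Program_WF D C)
    (h : StepMany (amend_D D ps) (amend D ps C) s tl C' s') :
    ∃ (tl' tl'' : List CC.TLabel) (C'' : CC.Chor) (s'' : CC.State),
      StepMany (amend_D D ps) C' s' tl' (amend D ps C'') s'' ∧
      StepMany D C s tl'' C'' s'' ∧
      SelExp tl'' (tl ++ tl') := by 
  classical
  obtain ⟨U, E, s'', hrun, hEnd⟩ := CC.headrun (CC.amend_D D ps) C' s'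
  have htot := CC.stepmany_trans h hrun
  obtain ⟨T'', ex, horig, hsels, hperm⟩ :=
    CC.frs D ps (tl ++ U).length (tl ++ U) C s E s'' le_rfl htot hEnd
  have hAm : CC.amend D ps E = E := by
    rcases hEnd with rfl | ⟨X, rfl⟩ <;> simp [CC.amend]
  exact ⟨U, T'', E, s'', by rw [hAm]; exact hrun, horig, CC.selExp_of_perm hsels hperm⟩
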